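/- arXiv:1907.02352 — 4 statements merged into one kernel-verified Lean document; each statement's English description precedes it below -/
import Mathlib

section
/- Let (S_t)_{t≥0} be a C₀-semigroup on a Banach space X with infinitesimal generator A. Then the following statements are equivalent: (1) the semigroup is norm continuous, i.e., lim_{t→0+} ‖S_t − Id‖ = 0 in operator norm; (2) A is a continuous (bounded) linear operator; (3) the domain of A equals all of X, i.e., for every x ∈ X the limit lim_{t→0+} (S_t x − x)/t exists. If these conditions hold, then S_t = e^{tA} := Σ_{n=0}^∞ (tⁿ/n!) Aⁿ for all t ≥ 0. -/
/-!
Uniform boundedness makes a C₀-semigroup bounded on compact time intervals, so its orbits are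
continuous and `∫₀^τ S s x` lies in the domain of the generator with image `S τ x - x`. If the
generator is bounded by `C`, this gives `‖S τ - 1‖ ≤ C M τ` with `M` a bound for `‖S‖` on
`[0, 1]`; if its domain is everything, uniform boundedness applied to `t⁻¹ (S t - 1)` bounds it.
If `S` is norm continuous, the same identity for the semigroup of left multiplications by `S t`
on `X →L[ℝ] X` shows, with the mean `B = τ⁻¹ ∫₀^τ S s` (invertible for small `τ`), that
`t⁻¹ (S t - 1) → τ⁻¹ (S τ - 1) B⁻¹` in norm; then `S` solves `S' = A S`, `S 0 = 1`, whose only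
solution is `exp (t A)`.
-/

open Filter Topology Set

section General

variable {E : Type*} [NormedAddCommGroup E] [NormedSpace ℝ E]

theorem hasDerivWithinAt_Ici_iff_tendsto_slope_zero_right {f : ℝ → E} {f' : E} {x : ℝ} :
    HasDerivWithinAt f f' (Ici x) x ↔
      Tendsto (fun t : ℝ => t⁻¹ • (f (x + t) - f x)) (𝓝[>] 0) (𝓝 f') := by
  have : 𝓝[>] x = map (x + ·) (𝓝[>] 0) := by simp
  rw [hasDerivWithinAt_iff_tendsto_slope, Ici_sdiff_left, this, tendsto_map'_iff]
  simp [slope, Function.comp_def]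

theorem ContinuousOn.hasDerivWithinAt_integral_Ici [CompleteSpace E] {f : ℝ → E} {a c : ℝ}
    (hf : ContinuousOn f (Ici a)) (hc : a ≤ c) :
    HasDerivWithinAt (fun u => ∫ s in a..u, f s) (f c) (Ici c) c := by
  have hsub : Ioi c ⊆ Ici a := fun s hs => hc.trans hs.out.le
  exact intervalIntegral.integral_hasDerivWithinAt_right
    ((hf.mono (uIcc_of_le hc ▸ Icc_subset_Ici_self)).intervalIntegrable)
    ((hf.stronglyMeasurableAtFilter_nhdsWithin measurableSet_Ici c).filter_mono
      (nhdsWithin_mono _ hsub))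
    ((hf c hc).mono hsub)

end General

section BanachSteinhaus

variable {𝕜 E F ι : Type*} [NontriviallyNormedField 𝕜] [SeminormedAddCommGroup E]
  [NormedSpace 𝕜 E] [CompleteSpace E] [SeminormedAddCommGroup F] [NormedSpace 𝕜 F]
  {l : Filter ι} [l.IsCountablyGenerated] {T : ι → E →L[𝕜] F}

theorem exists_eventually_opNorm_le_of_tendsto_apply
    (hT : ∀ x, ∃ y, Tendsto (fun i => T i x) l (𝓝 y)) : ∃ C, ∀ᶠ i in l, ‖T i‖ ≤ C := by
  by_contra! H
  obtain ⟨s, hs⟩ := l.exists_antitone_basis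
  choose u hu using fun n : ℕ => ((H n).and_eventually (hs.mem n)).exists
  have hul : Tendsto u atTop l := hs.tendsto fun n => (hu n).2
  obtain ⟨C, hC⟩ := banach_steinhaus fun x => by
    obtain ⟨y, hy⟩ := hT x
    obtain ⟨C, hC⟩ := (hy.comp hul).norm.bddAbove_range
    exact ⟨C, fun n => hC ⟨n, rfl⟩⟩
  obtain ⟨n, hn⟩ := exists_nat_gt C
  exact (hn.trans (hu n).1).not_ge (hC n)

theorem exists_norm_le_mul_norm_of_tendsto_apply [l.NeBot]
    (hT : ∀ x, ∃ y, Tendsto (fun i => T i x) l (𝓝 y)) :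
    ∃ C, ∀ x y, Tendsto (fun i => T i x) l (𝓝 y) → ‖y‖ ≤ C * ‖x‖ := by
  obtain ⟨C, hC⟩ := exists_eventually_opNorm_le_of_tendsto_apply hT
  refine ⟨C, fun x y hy => le_of_tendsto hy.norm ?_⟩
  filter_upwards [hC] with i hi
  exact (T i).le_of_opNorm_le hi x

end BanachSteinhaus

section Semigroup

variable {E : Type*} [NormedAddCommGroup E] [NormedSpace ℝ E]

structure IsC₀Semigroup (S : ℝ → E →L[ℝ] E) : Prop where
  map_zero : S 0 = ContinuousLinearMap.id ℝ E
  map_add : ∀ s t : ℝ, 0 ≤ s → 0 ≤ t → S (s + t) = (S s).comp (S t)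
  tendsto_nhdsGT : ∀ x : E, Tendsto (fun t : ℝ => S t x) (𝓝[>] 0) (𝓝 x)

namespace IsC₀Semigroup

variable {S : ℝ → E →L[ℝ] E}

theorem apply_add (hS : IsC₀Semigroup S) {s t : ℝ} (hs : 0 ≤ s) (ht : 0 ≤ t) (x : E) :
    S (s + t) x = S s (S t x) := by
  rw [hS.map_add s t hs ht, ContinuousLinearMap.comp_apply]

theorem norm_le_pow_of_forall_mem_Icc (hS : IsC₀Semigroup S) {δ M : ℝ}
    (hδ : ∀ t ∈ Icc 0 δ, ‖S t‖ ≤ M) (n : ℕ) : ∀ u ∈ Icc 0 (n * δ), ‖S u‖ ≤ M ^ n := by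
  induction n with
  | zero =>
    rintro u ⟨hu₀, hu⟩
    rw [Nat.cast_zero, zero_mul] at hu
    rw [le_antisymm hu hu₀, hS.map_zero, pow_zero]
    exact ContinuousLinearMap.norm_id_le
  | succ n ih =>
    rintro u ⟨hu₀, hu⟩
    have hδ₀ : 0 ≤ δ := by push_cast at hu; nlinarith
    have hM : 0 ≤ M := (norm_nonneg _).trans (hδ 0 ⟨le_rfl, hδ₀⟩)
    have hmin : min u δ ∈ Icc 0 δ := ⟨le_min hu₀ hδ₀, min_le_right u δ⟩
    have hrest : u - min u δ ∈ Icc 0 (n * δ) := by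
      constructor
      · linarith [min_le_left u δ]
      · rcases le_total u δ with h | h
        · rw [min_eq_left h, sub_self]; positivity
        · push_cast at hu; rw [min_eq_right h]; linarith
    calc ‖S u‖ = ‖(S (min u δ)).comp (S (u - min u δ))‖ := by
          rw [← hS.map_add _ _ hmin.1 hrest.1, add_sub_cancel]
      _ ≤ M * M ^ n := by
          refine (ContinuousLinearMap.opNorm_comp_le _ _).trans ?_
          exact mul_le_mul (hδ _ hmin) (ih _ hrest) (norm_nonneg _) hM
      _ = M ^ (n + 1) := (pow_succ' M n).symm

theorem norm_apply_sub_apply_le (hS : IsC₀Semigroup S) {u v : ℝ} (hu : 0 ≤ u) (huv : u ≤ v)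
    (x : E) : ‖S v x - S u x‖ ≤ ‖S u‖ * ‖S (v - u) x - x‖ := by
  have : S v x - S u x = S u (S (v - u) x - x) := by
    rw [map_sub, ← hS.apply_add hu (sub_nonneg.2 huv), add_sub_cancel]
  rw [this]
  exact (S u).le_opNorm _

variable [CompleteSpace E]

theorem exists_forall_mem_Icc_norm_le (hS : IsC₀Semigroup S) (b : ℝ) :
    ∃ M, ∀ t ∈ Icc 0 b, ‖S t‖ ≤ M := by
  obtain ⟨C, hC⟩ := exists_eventually_opNorm_le_of_tendsto_apply
    fun x => ⟨x, hS.tendsto_nhdsGT x⟩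
  obtain ⟨δ, hδ, hCδ⟩ := mem_nhdsGT_iff_exists_Ioc_subset.1 hC
  have hM : ∀ t ∈ Icc 0 δ, ‖S t‖ ≤ max C 1 := by
    rintro t ⟨ht₀, htδ⟩
    rcases ht₀.eq_or_lt with rfl | ht
    · rw [hS.map_zero]
      exact ContinuousLinearMap.norm_id_le.trans (le_max_right _ _)
    · exact (hCδ ⟨ht, htδ⟩).trans (le_max_left _ _)
  obtain ⟨n, hn⟩ := exists_nat_ge (b / δ)
  refine ⟨max C 1 ^ n, fun t ht => hS.norm_le_pow_of_forall_mem_Icc hM n t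
    ⟨ht.1, ht.2.trans ?_⟩⟩
  rwa [div_le_iff₀ hδ] at hn

theorem continuousOn_orbit (hS : IsC₀Semigroup S) (x : E) :
    ContinuousOn (fun t => S t x) (Ici 0) := by
  intro u hu
  obtain ⟨M, hM⟩ := hS.exists_forall_mem_Icc_norm_le (u + 1)
  have hx : ContinuousWithinAt (fun t => S t x) (Ici 0) 0 := by
    rw [← continuousWithinAt_Ioi_iff_Ici, ContinuousWithinAt, hS.map_zero]
    exact hS.tendsto_nhdsGT x
  have hdist : Tendsto (fun v => |v - u|) (𝓝[Ici 0] u) (𝓝[≥] 0) := by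
    refine tendsto_nhdsWithin_iff.2 ⟨?_, Eventually.of_forall fun v => abs_nonneg (v - u)⟩
    have : Continuous fun v : ℝ => |v - u| := by fun_prop
    simpa using (this.tendsto u).mono_left nhdsWithin_le_nhds
  have hmodulus : ∀ᶠ v in 𝓝[Ici 0] u, ‖S v x - S u x‖ ≤ M * ‖S |v - u| x - x‖ := by
    filter_upwards [self_mem_nhdsWithin, nhdsWithin_le_nhds (Iio_mem_nhds (lt_add_one u))]
      with v hv hv'
    rcases le_total u v with h | h
    · rw [abs_of_nonneg (sub_nonneg.2 h)]
      refine (hS.norm_apply_sub_apply_le hu h x).trans ?_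
      gcongr
      exact hM u ⟨hu, by linarith⟩
    · rw [abs_sub_comm, abs_of_nonneg (sub_nonneg.2 h), norm_sub_rev]
      refine (hS.norm_apply_sub_apply_le hv h x).trans ?_
      gcongr
      exact hM v ⟨hv, hv'.out.le⟩
  rw [ContinuousWithinAt, tendsto_iff_norm_sub_tendsto_zero]
  refine squeeze_zero' (Eventually.of_forall fun _ => norm_nonneg _) hmodulus ?_
  have := ((hx.tendsto.comp hdist).sub_const x).norm.const_mul M
  simpa [hS.map_zero] using this

theorem tendsto_slope_integral (hS : IsC₀Semigroup S) (x : E) {τ : ℝ} (hτ : 0 ≤ τ) :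
    Tendsto (fun h : ℝ => h⁻¹ • (S h (∫ s in 0..τ, S s x) - ∫ s in 0..τ, S s x))
      (𝓝[>] 0) (𝓝 (S τ x - x)) := by
  set F : ℝ → E := fun u => ∫ s in 0..u, S s x
  have hcont := hS.continuousOn_orbit x
  have hint : ∀ a b : ℝ, 0 ≤ a → 0 ≤ b →
      IntervalIntegrable (fun s => S s x) MeasureTheory.volume a b := fun a b ha hb =>
    (hcont.mono fun s hs => (le_min ha hb).trans hs.1).intervalIntegrable
  have hshift : ∀ h, 0 ≤ h → S h (F τ) - F τ = (F (τ + h) - F τ) - (F (0 + h) - F 0) := by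
    intro h hh
    have : S h (F τ) = F (τ + h) - F h :=
      calc S h (F τ) = ∫ s in 0..τ, S h (S s x) :=
            ((S h).intervalIntegral_comp_comm (hint 0 τ le_rfl hτ)).symm
        _ = ∫ s in 0..τ, S (s + h) x := by
            refine intervalIntegral.integral_congr fun s hs => ?_
            rw [uIcc_of_le hτ] at hs
            rw [add_comm, hS.apply_add hh hs.1]
        _ = F (τ + h) - F h := by
            rw [intervalIntegral.integral_comp_add_right (fun s => S s x), zero_add,
              intervalIntegral.integral_interval_sub_left (hint _ _ le_rfl (by positivity))
                (hint _ _ le_rfl hh)]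
    simp only [this, zero_add, F, intervalIntegral.integral_same]
    abel
  have h1 := hasDerivWithinAt_Ici_iff_tendsto_slope_zero_right.1
    (hcont.hasDerivWithinAt_integral_Ici hτ)
  have h0 := hasDerivWithinAt_Ici_iff_tendsto_slope_zero_right.1
    (hcont.hasDerivWithinAt_integral_Ici le_rfl)
  simp only [hS.map_zero, ContinuousLinearMap.id_apply] at h0
  refine (h1.sub h0).congr' ?_
  filter_upwards [self_mem_nhdsWithin] with h hh
  rw [← smul_sub, hshift h hh.out.le]

theorem tendsto_norm_sub_id_of_generator_bounded (hS : IsC₀Semigroup S)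
    (hC : ∃ C, ∀ x y : E, Tendsto (fun t : ℝ => t⁻¹ • (S t x - x)) (𝓝[>] 0) (𝓝 y) →
      ‖y‖ ≤ C * ‖x‖) :
    Tendsto (fun t => ‖S t - ContinuousLinearMap.id ℝ E‖) (𝓝[>] 0) (𝓝 0) := by
  obtain ⟨C, hC⟩ := hC
  obtain ⟨M, hM⟩ := hS.exists_forall_mem_Icc_norm_le 1
  have hM₀ : 0 ≤ M := (norm_nonneg _).trans (hM 0 ⟨le_rfl, zero_le_one⟩)
  have hnorm_le : ∀ τ ∈ Icc (0 : ℝ) 1, ‖S τ - ContinuousLinearMap.id ℝ E‖ ≤ max C 0 * M * τ := by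
    rintro τ ⟨hτ₀, hτ₁⟩
    refine ContinuousLinearMap.opNorm_le_bound _ (by positivity) fun x => ?_
    have hint : ‖∫ s in 0..τ, S s x‖ ≤ M * ‖x‖ * |τ - 0| := by
      refine intervalIntegral.norm_integral_le_of_norm_le_const fun s hs => ?_
      rw [uIoc_of_le hτ₀] at hs
      exact (S s).le_of_opNorm_le (hM s ⟨hs.1.le, hs.2.trans hτ₁⟩) x
    rw [sub_zero, abs_of_nonneg hτ₀] at hint
    calc ‖(S τ - ContinuousLinearMap.id ℝ E) x‖ = ‖S τ x - x‖ := rfl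
      _ ≤ C * ‖∫ s in 0..τ, S s x‖ := hC _ _ (hS.tendsto_slope_integral x hτ₀)
      _ ≤ max C 0 * ‖∫ s in 0..τ, S s x‖ := by gcongr; exact le_max_left _ _
      _ ≤ max C 0 * (M * ‖x‖ * τ) := by gcongr
      _ = max C 0 * M * τ * ‖x‖ := by ring
  have hlim : Tendsto (fun τ : ℝ => max C 0 * M * τ) (𝓝[>] 0) (𝓝 0) := by
    have : Continuous fun τ : ℝ => max C 0 * M * τ := by fun_prop
    simpa using (this.tendsto 0).mono_left nhdsWithin_le_nhds
  refine squeeze_zero' (Eventually.of_forall fun _ => norm_nonneg _) ?_ hlim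
  filter_upwards [Ioc_mem_nhdsGT zero_lt_one] with τ hτ
  exact hnorm_le τ (Ioc_subset_Icc_self hτ)

end IsC₀Semigroup

end Semigroup

section BanachAlgebra

variable {R : Type*} [NormedRing R] [NormedAlgebra ℝ R] {f : ℝ → R}

theorem isC₀Semigroup_mul_left (h0 : f 0 = 1)
    (hadd : ∀ s t : ℝ, 0 ≤ s → 0 ≤ t → f (s + t) = f s * f t)
    (hf : Tendsto f (𝓝[>] 0) (𝓝 1)) :
    IsC₀Semigroup fun t => ContinuousLinearMap.mul ℝ R (f t) where
  map_zero := by ext; simp [h0]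
  map_add s t hs ht := by ext; simp [hadd s t hs ht, mul_assoc]
  tendsto_nhdsGT x := by simpa using hf.mul_const x

variable [CompleteSpace R]

theorem eq_exp_smul_of_hasDerivWithinAt {a : R} (hf : ContinuousOn f (Ici 0)) (h0 : f 0 = 1)
    (hderiv : ∀ c, 0 ≤ c → HasDerivWithinAt f (a * f c) (Ici c) c) {t : ℝ} (ht : 0 ≤ t) :
    f t = NormedSpace.exp (t • a) :=
  ODE_solution_unique (v := fun _ y => a * y) (fun _ => (ContinuousLinearMap.mul ℝ R a).lipschitz)
    (hf.mono Icc_subset_Ici_self) (fun c hc => hderiv c hc.1)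
    (fun u _ => (hasDerivAt_exp_smul_const' a u).continuousAt.continuousWithinAt)
    (fun c _ => (hasDerivAt_exp_smul_const' a c).hasDerivWithinAt)
    (by rw [h0, zero_smul, NormedSpace.exp_zero]) ⟨ht, le_rfl⟩

theorem exists_tendsto_slope_and_eq_exp (h0 : f 0 = 1)
    (hadd : ∀ s t : ℝ, 0 ≤ s → 0 ≤ t → f (s + t) = f s * f t)
    (hf : Tendsto f (𝓝[>] 0) (𝓝 1)) :
    ∃ a : R, Tendsto (fun t : ℝ => t⁻¹ • (f t - 1)) (𝓝[>] 0) (𝓝 a) ∧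
      ∀ t, 0 ≤ t → f t = NormedSpace.exp (t • a) := by
  have hT := isC₀Semigroup_mul_left h0 hadd hf
  have hcont : ContinuousOn f (Ici 0) := by simpa using hT.continuousOn_orbit 1
  have hmean : Tendsto (fun τ : ℝ => τ⁻¹ • ∫ s in 0..τ, f s) (𝓝[>] 0) (𝓝 1) := by
    simpa [h0] using hasDerivWithinAt_Ici_iff_tendsto_slope_zero_right.1
      (hcont.hasDerivWithinAt_integral_Ici le_rfl)
  obtain ⟨τ, ⟨u, hu⟩, hτ⟩ :=
    ((hmean.eventually (Units.isOpen.mem_nhds isUnit_one)).and self_mem_nhdsWithin).exists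
  have hslope : Tendsto (fun t : ℝ => t⁻¹ • (f t - 1)) (𝓝[>] 0) (𝓝 (τ⁻¹ • (f τ - 1) * ↑u⁻¹)) := by
    have := ((hT.tendsto_slope_integral 1 (le_of_lt hτ)).const_smul τ⁻¹).mul_const (↑u⁻¹ : R)
    simp only [ContinuousLinearMap.mul_apply', mul_one] at this
    refine this.congr fun h => ?_
    rw [smul_comm, smul_sub, ← mul_smul_comm, ← hu, ← sub_one_mul, smul_mul_assoc, mul_assoc,
      u.mul_inv, mul_one]
  refine ⟨_, hslope, fun t ht => eq_exp_smul_of_hasDerivWithinAt hcont h0 (fun c hc => ?_) ht⟩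
  rw [hasDerivWithinAt_Ici_iff_tendsto_slope_zero_right]
  refine (hslope.mul_const (f c)).congr' ?_
  filter_upwards [self_mem_nhdsWithin] with h hh
  rw [add_comm c h, hadd h c hh.out.le hc, smul_mul_assoc, sub_mul, one_mul]

end BanachAlgebra

/-- **Characterization of norm continuous semigroups.**
Let `(S t)_{t ≥ 0}` be a C₀-semigroup on a Banach space `X` with generator `A`. Then the
following are equivalent: (1) the semigroup is norm continuous, i.e. `‖S t - Id‖ → 0` as
`t → 0+`; (2) the generator is a continuous (bounded) operator, i.e. there is `C` with
`‖A x‖ ≤ C * ‖x‖` for all `x ∈ D(A)`; (3) `D(A) = X`, i.e. for every `x` the limit defining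
the generator exists. If these conditions hold, then the generator is (given by) a bounded
operator `A : X →L[ℝ] X` and `S t = exp (t • A)` for all `t ≥ 0`. -/
theorem semigroup_norm_continuous_iff_generator_bounded
    {X : Type*} [NormedAddCommGroup X] [NormedSpace ℝ X] [CompleteSpace X]
    (S : ℝ → X →L[ℝ] X)
    (hS0 : S 0 = ContinuousLinearMap.id ℝ X)
    (hSadd : ∀ s t : ℝ, 0 ≤ s → 0 ≤ t → S (s + t) = (S s).comp (S t))
    (hScont : ∀ x : X, Tendsto (fun t : ℝ => S t x) (𝓝[>] (0 : ℝ)) (𝓝 x)) :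
    ((Tendsto (fun t : ℝ => ‖S t - ContinuousLinearMap.id ℝ X‖) (𝓝[>] (0 : ℝ)) (𝓝 0)) ↔
      (∃ C : ℝ, ∀ x y : X,
        Tendsto (fun t : ℝ => t⁻¹ • (S t x - x)) (𝓝[>] (0 : ℝ)) (𝓝 y) → ‖y‖ ≤ C * ‖x‖)) ∧
    ((Tendsto (fun t : ℝ => ‖S t - ContinuousLinearMap.id ℝ X‖) (𝓝[>] (0 : ℝ)) (𝓝 0)) ↔
      (∀ x : X, ∃ y : X,
        Tendsto (fun t : ℝ => t⁻¹ • (S t x - x)) (𝓝[>] (0 : ℝ)) (𝓝 y))) ∧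
    ((Tendsto (fun t : ℝ => ‖S t - ContinuousLinearMap.id ℝ X‖) (𝓝[>] (0 : ℝ)) (𝓝 0)) →
      ∃ A : X →L[ℝ] X,
        (∀ x : X, Tendsto (fun t : ℝ => t⁻¹ • (S t x - x)) (𝓝[>] (0 : ℝ)) (𝓝 (A x))) ∧
        ∀ t : ℝ, 0 ≤ t → S t = NormedSpace.exp (t • A)) := by
  have hS : IsC₀Semigroup S := ⟨hS0, hSadd, hScont⟩
  have hgen : Tendsto (fun t : ℝ => ‖S t - ContinuousLinearMap.id ℝ X‖) (𝓝[>] 0) (𝓝 0) →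
      ∃ A : X →L[ℝ] X,
        (∀ x, Tendsto (fun t : ℝ => t⁻¹ • (S t x - x)) (𝓝[>] 0) (𝓝 (A x))) ∧
        ∀ t : ℝ, 0 ≤ t → S t = NormedSpace.exp (t • A) := fun h => by
    obtain ⟨A, hA, hexp⟩ :=
      exists_tendsto_slope_and_eq_exp hS0 hSadd (tendsto_iff_norm_sub_tendsto_zero.2 h)
    exact ⟨A, fun x => ((ContinuousLinearMap.apply ℝ X x).continuous.tendsto A).comp hA, hexp⟩
  refine ⟨⟨fun h => ?_, hS.tendsto_norm_sub_id_of_generator_bounded⟩,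
    ⟨fun h => ?_, fun h => hS.tendsto_norm_sub_id_of_generator_bounded
      (exists_norm_le_mul_norm_of_tendsto_apply (T := fun t => t⁻¹ • (S t - 1)) h)⟩, hgen⟩
  · obtain ⟨A, hA, -⟩ := hgen h
    exact ⟨‖A‖, fun x y hy => tendsto_nhds_unique hy (hA x) ▸ A.le_opNorm x⟩
  · obtain ⟨A, hA, -⟩ := hgen h
    exact fun x => ⟨A x, hA x⟩
end

section
/- Let E be a separable Banach space, let (S_t)_{t≥0} be a C₀-semigroup on E, and let f : ℝ₊ → E be a strongly measurable mapping such that ∫₀ᵗ ‖f(s)‖ ds < ∞ for all t ≥ 0. Then the mapping F : ℝ₊ → E defined by the Bochner integral F(t) = ∫₀ᵗ S_{t−s} f(s) ds is continuous. -/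
/-!
By Banach–Steinhaus, a C₀-semigroup is bounded on every compact time interval `[0, T]`; together
with the semigroup law this makes its orbits continuous and `(u, x) ↦ S u x` jointly continuous
on `[0, ∞) × E`. For `t < T` write `F t = ∫₀ᵀ 1_{s ≤ t} S (t - s) (f s) ds`: the integrand is
dominated by `M ‖f s‖` with `M` a bound for `‖S‖` on `[0, T]`, and for every `s ≠ t₀` it converges
as `t → t₀`, so dominated convergence gives continuity of `F` at `t₀`.
-/

open Filter Topology MeasureTheory Set

section BoundedFamily

variable {𝕜 E F : Type*} [NontriviallyNormedField 𝕜] [NormedAddCommGroup E] [NormedSpace 𝕜 E]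
  [NormedAddCommGroup F] [NormedSpace 𝕜 F]

theorem tendsto_apply_zero_of_eventually_norm_le {ι : Type*} {l : Filter ι} {K : ι → E →L[𝕜] F}
    {y : ι → E} {M : ℝ} (hK : ∀ᶠ i in l, ‖K i‖ ≤ M) (hy : Tendsto y l (𝓝 0)) :
    Tendsto (fun i => K i (y i)) l (𝓝 0) := by
  refine squeeze_zero_norm' (hK.mono fun i hi => (K i).le_of_opNorm_le hi (y i)) ?_
  simpa using hy.norm.const_mul M

theorem continuous_apply_of_locally_bounded {X : Type*} [TopologicalSpace X]
    {K : X → E →L[𝕜] F} (hK : ∀ x, Continuous fun u => K u x)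
    (hbdd : ∀ u₀, ∃ M, ∀ᶠ u in 𝓝 u₀, ‖K u‖ ≤ M) :
    Continuous fun p : X × E => K p.1 p.2 := by
  refine continuous_iff_continuousAt.2 fun ⟨u₀, x₀⟩ => ?_
  obtain ⟨M, hM⟩ := hbdd u₀
  have hsmall : Tendsto (fun p : X × E => K p.1 (p.2 - x₀)) (𝓝 (u₀, x₀)) (𝓝 0) :=
    tendsto_apply_zero_of_eventually_norm_le (hM.prod_inl_nhds x₀)
      (tendsto_sub_nhds_zero_iff.2 continuous_snd.continuousAt)
  have := hsmall.add (((hK x₀).tendsto u₀).comp continuous_fst.continuousAt)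
  simpa [ContinuousAt, map_sub] using this

end BoundedFamily

section Semigroup

variable {𝕜 E : Type*} [NontriviallyNormedField 𝕜] [NormedAddCommGroup E] [NormedSpace 𝕜 E]

structure IsC0Semigroup (S : ℝ → E →L[𝕜] E) : Prop where
  map_zero : S 0 = ContinuousLinearMap.id 𝕜 E
  map_add : ∀ s t : ℝ, 0 ≤ s → 0 ≤ t → S (s + t) = (S s).comp (S t)
  tendsto_nhdsGT_zero : ∀ x, Tendsto (fun t => S t x) (𝓝[>] 0) (𝓝 x)

namespace IsC0Semigroup

variable {S : ℝ → E →L[𝕜] E} (hS : IsC0Semigroup S)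
include hS

theorem continuousWithinAt_Ici_zero (x : E) :
    ContinuousWithinAt (fun t => S t x) (Ici 0) 0 := by
  rw [← continuousWithinAt_Ioi_iff_Ici, ContinuousWithinAt, hS.map_zero]
  exact hS.tendsto_nhdsGT_zero x

theorem map_add_apply {s t : ℝ} (hs : 0 ≤ s) (ht : 0 ≤ t) (x : E) :
    S (s + t) x = S s (S t x) := by
  rw [hS.map_add s t hs ht, ContinuousLinearMap.comp_apply]

theorem exists_pos_norm_le [CompleteSpace E] : ∃ δ > 0, ∃ C, ∀ u ∈ Icc 0 δ, ‖S u‖ ≤ C := by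
  by_contra! h
  choose u hu hlarge using fun n : ℕ => h (1 / (n + 1)) Nat.one_div_pos_of_nat n
  have hu0 : Tendsto u atTop (𝓝[≥] 0) :=
    tendsto_nhdsWithin_iff.2 ⟨squeeze_zero (fun n => (hu n).1) (fun n => (hu n).2)
      tendsto_one_div_add_atTop_nhds_zero_nat, .of_forall fun n => (hu n).1⟩
  obtain ⟨C, hC⟩ := banach_steinhaus (g := fun n => S (u n)) fun x => by
    obtain ⟨C, hC⟩ := ((hS.continuousWithinAt_Ici_zero x).tendsto.comp hu0).norm.bddAbove_range
    exact ⟨C, fun n => hC ⟨n, rfl⟩⟩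
  obtain ⟨n, hn⟩ := exists_nat_gt C
  exact (hlarge n).not_ge ((hC n).trans hn.le)

theorem exists_norm_le [CompleteSpace E] (T : ℝ) : ∃ M, ∀ u ∈ Icc 0 T, ‖S u‖ ≤ M := by
  obtain ⟨δ, hδ, C, hC⟩ := hS.exists_pos_norm_le
  have hC0 : 0 ≤ C := (norm_nonneg _).trans (hC 0 ⟨le_rfl, hδ.le⟩)
  have hpow : ∀ n : ℕ, ∀ u ∈ Icc 0 (n * δ), ‖S u‖ ≤ C ^ n := by
    intro n
    induction n with
    | zero =>
      intro u hu
      obtain rfl : u = 0 := by simpa using hu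
      simpa [hS.map_zero] using ContinuousLinearMap.norm_id_le
    | succ n ih =>
      intro u hu
      have hstep : min u δ ∈ Icc 0 δ := ⟨le_min hu.1 hδ.le, min_le_right _ _⟩
      have hrest : u - min u δ ∈ Icc 0 (n * δ) := by
        refine ⟨sub_nonneg.2 (min_le_left _ _), ?_⟩
        rw [sub_le_iff_le_add, ← min_add_add_left]
        have := hu.2
        push_cast at this
        exact le_min (by nlinarith [hu.1]) (by linarith)
      have hsplit : S u = (S (u - min u δ)).comp (S (min u δ)) := by
        rw [← hS.map_add _ _ hrest.1 hstep.1, sub_add_cancel]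
      calc ‖S u‖ ≤ ‖S (u - min u δ)‖ * ‖S (min u δ)‖ := hsplit ▸ (S _).opNorm_comp_le _
        _ ≤ C ^ n * C := mul_le_mul (ih _ hrest) (hC _ hstep) (norm_nonneg _) (pow_nonneg hC0 n)
        _ = C ^ (n + 1) := (pow_succ C n).symm
  obtain ⟨n, hn⟩ := exists_nat_ge (T / δ)
  exact ⟨C ^ n, fun u hu => hpow n u ⟨hu.1, hu.2.trans ((div_le_iff₀ hδ).1 hn)⟩⟩

theorem continuousOn_apply [CompleteSpace E] (x : E) :
    ContinuousOn (fun u => S u x) (Ici 0) := by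
  intro u₀ (hu₀ : 0 ≤ u₀)
  rcases hu₀.eq_or_lt with rfl | hpos
  · exact hS.continuousWithinAt_Ici_zero x
  refine (continuousAt_iff_continuous_left'_right'.2 ⟨?_, ?_⟩).continuousWithinAt
  · obtain ⟨M, hM⟩ := hS.exists_norm_le u₀
    have hshift : Tendsto (u₀ - ·) (𝓝[<] u₀) (𝓝[>] 0) := by
      rw [Tendsto, map_subLeft_nhdsLT, sub_self]
    have hpos_near : ∀ᶠ u in 𝓝[<] u₀, u ∈ Ioo 0 u₀ := Ioo_mem_nhdsLT hpos
    have hsmall := tendsto_apply_zero_of_eventually_norm_le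
      (hpos_near.mono fun u hu => hM u (Ioo_subset_Icc_self hu))
      (tendsto_sub_nhds_zero_iff.2 ((hS.tendsto_nhdsGT_zero x).comp hshift))
    have hlim : Tendsto (fun u => S u₀ x - S u (S (u₀ - u) x - x)) (𝓝[<] u₀) (𝓝 (S u₀ x)) := by
      simpa using tendsto_const_nhds.sub hsmall
    refine hlim.congr' ?_
    filter_upwards [hpos_near] with u hu
    rw [map_sub, ← hS.map_add_apply hu.1.le (sub_nonneg.2 hu.2.le), add_sub_cancel,
      sub_sub_cancel]
  · have hshift : Tendsto (· - u₀) (𝓝[>] u₀) (𝓝[>] 0) := by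
      rw [Tendsto, map_subRight_nhdsGT, sub_self]
    refine (((S u₀).continuous.tendsto x).comp
      ((hS.tendsto_nhdsGT_zero x).comp hshift)).congr' ?_
    filter_upwards [self_mem_nhdsWithin] with u (hu : u₀ < u)
    rw [Function.comp_apply, Function.comp_apply, ← hS.map_add_apply hu₀ (sub_nonneg.2 hu.le),
      add_sub_cancel]

end IsC0Semigroup

end Semigroup

theorem continuousAt_indicator_Iic_apply {α F : Type*} [TopologicalSpace α] [LinearOrder α]
    [OrderClosedTopology α] [TopologicalSpace F] [Zero F] {g : α → α → F} {s t₀ : α}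
    (hg : ContinuousAt (g · s) t₀) (hs : t₀ ≠ s) :
    ContinuousAt (fun t => (Iic t).indicator (g t) s) t₀ := by
  rcases hs.lt_or_gt with h | h
  · exact continuousAt_const.congr_of_eventuallyEq
      ((eventually_lt_nhds h).mono fun t ht =>
        indicator_of_notMem (s := Iic t) (not_le.2 ht) (g t))
  · exact hg.congr_of_eventuallyEq
      ((eventually_gt_nhds h).mono fun t ht =>
        indicator_of_mem (s := Iic t) (mem_Iic.2 ht.le) (g t))

section Convolution

variable {𝕜 E F : Type*} [NontriviallyNormedField 𝕜] [NormedAddCommGroup E] [NormedSpace 𝕜 E]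
  [NormedAddCommGroup F] [NormedSpace 𝕜 F]

theorem continuous_apply_max_zero {K : ℝ → E →L[𝕜] F}
    (hK : ∀ x, ContinuousOn (fun u => K u x) (Ici 0))
    (hKbdd : ∀ T, ∃ M, ∀ u ∈ Icc 0 T, ‖K u‖ ≤ M) :
    Continuous fun p : ℝ × E => K (max p.1 0) p.2 := by
  refine continuous_apply_of_locally_bounded (K := fun u => K (max u 0))
    (fun x => (hK x).comp_continuous (continuous_id.max continuous_const) fun u => le_max_right u 0)
    fun u₀ => ?_
  obtain ⟨M, hM⟩ := hKbdd (max u₀ 0 + 1)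
  refine ⟨M, (eventually_lt_nhds (lt_add_one u₀)).mono fun u hu => hM _ ⟨le_max_right _ _, ?_⟩⟩
  exact max_le (by linarith [le_max_left u₀ 0]) (by positivity)

theorem continuousOn_intervalIntegral_apply_sub [NormedSpace ℝ F] {K : ℝ → E →L[𝕜] F}
    {f : ℝ → E}
    (hK : ∀ x, ContinuousOn (fun u => K u x) (Ici 0))
    (hKbdd : ∀ T, ∃ M, ∀ u ∈ Icc 0 T, ‖K u‖ ≤ M)
    (hf : ∀ T, 0 ≤ T → IntegrableOn f (Icc 0 T)) :
    ContinuousOn (fun t => ∫ s in 0..t, K (t - s) (f s)) (Ici 0) := by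
  have hKmax := continuous_apply_max_zero hK hKbdd
  intro t₀ (ht₀ : 0 ≤ t₀)
  set T := t₀ + 1
  have hT : 0 ≤ T := by positivity
  obtain ⟨M, hM⟩ := hKbdd T
  have hfT : IntegrableOn f (Ioc 0 T) := (hf T hT).mono_set Ioc_subset_Icc_self
  set H : ℝ → ℝ → F := fun t s => (Iic t).indicator (fun s => K (max (t - s) 0) (f s)) s
  have hH : ∀ t ∈ Icc 0 T, ∫ s in 0..t, K (t - s) (f s) = ∫ s in 0..T, H t s := by
    intro t ht
    rw [intervalIntegral.integral_of_le ht.1, intervalIntegral.integral_of_le hT,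
      setIntegral_indicator measurableSet_Iic, Ioc_inter_Iic, min_eq_right ht.2]
    refine setIntegral_congr_fun measurableSet_Ioc fun s hs => ?_
    simp only [max_eq_left (sub_nonneg.2 hs.2)]
  have hcont : ContinuousWithinAt (fun t => ∫ s in 0..T, H t s) (Ici 0) t₀ := by
    rw [← uIoc_of_le hT] at hfT
    refine intervalIntegral.continuousWithinAt_of_dominated_interval
      (bound := fun s => M * ‖f s‖) (.of_forall fun t => ?_) ?_ ?_ ?_
    · exact (hKmax.comp_aestronglyMeasurable ((continuous_const.sub continuous_id).aestronglyMeasurable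
        |>.prodMk hfT.aestronglyMeasurable)).indicator measurableSet_Iic
    · filter_upwards [nhdsWithin_le_nhds (Iio_mem_nhds (lt_add_one t₀))] with t ht
      refine .of_forall fun s hs => (norm_indicator_le_norm_self _ _).trans
        ((K _).le_of_opNorm_le (hM _ ⟨le_max_right _ _, max_le ?_ hT⟩) _)
      rw [uIoc_of_le hT] at hs
      linarith [hs.1, mem_Iio.1 ht]
    · exact intervalIntegrable_iff.2 (hfT.norm.const_mul M)
    · filter_upwards [Measure.ae_ne volume t₀] with s hs _
      have hcont_s : Continuous fun t => K (max (t - s) 0) (f s) :=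
        hKmax.comp ((continuous_id.sub continuous_const).prodMk continuous_const)
      exact (continuousAt_indicator_Iic_apply (g := fun t s => K (max (t - s) 0) (f s))
        hcont_s.continuousAt hs.symm).continuousWithinAt
  refine hcont.congr_of_eventuallyEq ?_ (hH t₀ ⟨ht₀, by linarith⟩)
  filter_upwards [self_mem_nhdsWithin, nhdsWithin_le_nhds (Iio_mem_nhds (lt_add_one t₀))]
    with t (ht : 0 ≤ t) (htT : t < T)
  exact hH t ⟨ht, htT.le⟩

end Convolution

theorem convolution_semigroup_continuous_general
    {E : Type*} [NormedAddCommGroup E] [NormedSpace ℝ E] [CompleteSpace E]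
    (S : ℝ → E →L[ℝ] E)
    (hS0 : S 0 = ContinuousLinearMap.id ℝ E)
    (hSadd : ∀ s t : ℝ, 0 ≤ s → 0 ≤ t → S (s + t) = (S s).comp (S t))
    (hScont : ∀ x : E, Tendsto (fun t : ℝ => S t x) (𝓝[>] (0 : ℝ)) (𝓝 x))
    (f : ℝ → E) (hf : StronglyMeasurable f)
    (hint : ∀ t : ℝ, 0 ≤ t → (∫⁻ s in Set.Icc (0 : ℝ) t, (‖f s‖₊ : ENNReal)) < ⊤) :
    ContinuousOn (fun t : ℝ => ∫ s in (0:ℝ)..t, S (t - s) (f s)) (Set.Ici (0 : ℝ)) := by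
  have hS : IsC0Semigroup S := ⟨hS0, hSadd, hScont⟩
  exact continuousOn_intervalIntegral_apply_sub hS.continuousOn_apply hS.exists_norm_le
    fun T hT => ⟨hf.aestronglyMeasurable, hint T hT⟩

/-- **Continuity of deterministic convolution with a C₀-semigroup.**
Let `E` be a separable Banach space, let `(S t)_{t ≥ 0}` be a C₀-semigroup on `E`, and let
`f : ℝ₊ → E` be strongly measurable with `∫₀ᵗ ‖f s‖ ds < ∞` for all `t ≥ 0`. Then the mapping
`F : ℝ₊ → E`, `F t = ∫₀ᵗ S (t - s) (f s) ds` (a Bochner integral), is continuous. -/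
theorem convolution_semigroup_continuous
    {E : Type*} [NormedAddCommGroup E] [NormedSpace ℝ E] [CompleteSpace E]
    [TopologicalSpace.SeparableSpace E]
    (S : ℝ → E →L[ℝ] E)
    (hS0 : S 0 = ContinuousLinearMap.id ℝ E)
    (hSadd : ∀ s t : ℝ, 0 ≤ s → 0 ≤ t → S (s + t) = (S s).comp (S t))
    (hScont : ∀ x : E, Tendsto (fun t : ℝ => S t x) (𝓝[>] (0 : ℝ)) (𝓝 x))
    (f : ℝ → E) (hf : StronglyMeasurable f)
    (hint : ∀ t : ℝ, 0 ≤ t → (∫⁻ s in Set.Icc (0 : ℝ) t, (‖f s‖₊ : ENNReal)) < ⊤) :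
    ContinuousOn (fun t : ℝ => ∫ s in (0:ℝ)..t, S (t - s) (f s)) (Set.Ici (0 : ℝ)) :=
  convolution_semigroup_continuous_general S hS0 hSadd hScont f hf hint
end

section
/- Let H be a separable Hilbert space, let U ⊆ H be open, let V ⊆ ℝ^m be open, let ζ₁, …, ζ_m ∈ H, and write ⟨ζ, g⟩ := (⟨ζ₁, g⟩, …, ⟨ζ_m, g⟩) ∈ ℝ^m for g ∈ H. Let M ⊆ H, let φ : ℝ^m → H be twice continuously differentiable with bounded derivatives, suppose φ maps V bijectively onto U ∩ M with inverse given by φ(⟨ζ, g⟩) = g for all g ∈ U ∩ M, and suppose Dφ(y) is injective for all y ∈ V. Let σ : H → H be continuously differentiable and suppose the tangency condition σ(g) = Dφ(⟨ζ, g⟩)(⟨ζ, σ(g)⟩) holds for all g ∈ U ∩ M. Then for every h ∈ U ∩ M, with y = ⟨ζ, h⟩, one has the decomposition Dσ(h)σ(h) = Dφ(y)(⟨ζ, Dσ(h)σ(h)⟩) + D²φ(y)(⟨ζ, σ(h)⟩, ⟨ζ, σ(h)⟩). -/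
/-! Write `π g = ⟨ζ, g⟩`. Differentiating `φ ∘ π ∘ φ = φ` shows that `π ∘ φ` has injective, hence
invertible, derivative at the preimage of `h`, so by the inverse function theorem `π (U ∩ M)` is a
neighbourhood of `π h`. On it the tangency condition reads `σ ∘ φ = Dφ(·) (π ∘ σ ∘ φ)`;
differentiating this identity at `π h` in the direction `π (σ h)`, where `φ (π h) = h` and
`Dφ(π h) (π (σ h)) = σ h`, gives the decomposition by the chain and product rules. -/

open Set Filter Topology

section

variable {𝕜 E F : Type*} [NontriviallyNormedField 𝕜] [NormedAddCommGroup E] [NormedSpace 𝕜 E]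
  [NormedAddCommGroup F] [NormedSpace 𝕜 F]

theorem injective_fderiv_of_comp_eventuallyEq {φ : E → F} {ψ : E → E} {x : E}
    (hφ : DifferentiableAt 𝕜 φ (ψ x)) (hψ : DifferentiableAt 𝕜 ψ x)
    (hφψ : φ ∘ ψ =ᶠ[𝓝 x] φ) (hinj : Function.Injective (fderiv 𝕜 φ x)) :
    Function.Injective (fderiv 𝕜 ψ x) := by
  have hchain : (fderiv 𝕜 φ (ψ x)).comp (fderiv 𝕜 ψ x) = fderiv 𝕜 φ x := by
    rw [← fderiv_comp x hφ hψ, hφψ.fderiv_eq]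
  rw [← hchain, ContinuousLinearMap.coe_comp] at hinj
  exact hinj.of_comp

theorem fderiv_apply_self_eq_of_tangent {φ : E → F} {σ : F → F} (π : F →L[𝕜] E) {y : E}
    (hφ : ContDiffAt 𝕜 2 φ y) (hσ : DifferentiableAt 𝕜 σ (φ y))
    (htan : (fun z => σ (φ z)) =ᶠ[𝓝 y] fun z => fderiv 𝕜 φ z (π (σ (φ z)))) :
    fderiv 𝕜 σ (φ y) (σ (φ y)) =
      fderiv 𝕜 φ y (π (fderiv 𝕜 σ (φ y) (σ (φ y)))) +
        fderiv 𝕜 (fderiv 𝕜 φ) y (π (σ (φ y))) (π (σ (φ y))) := by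
  have hσy : σ (φ y) = fderiv 𝕜 φ y (π (σ (φ y))) := htan.eq_of_nhds
  have hσφ : HasFDerivAt (fun z => σ (φ z)) ((fderiv 𝕜 σ (φ y)).comp (fderiv 𝕜 φ y)) y :=
    hσ.hasFDerivAt.comp y (hφ.differentiableAt two_ne_zero).hasFDerivAt
  have hDφ : DifferentiableAt 𝕜 (fderiv 𝕜 φ) y :=
    (hφ.fderiv_right (m := 1) le_rfl).differentiableAt one_ne_zero
  have hπσφ : HasFDerivAt (fun z => π (σ (φ z)))
      (π.comp ((fderiv 𝕜 σ (φ y)).comp (fderiv 𝕜 φ y))) y :=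
    π.hasFDerivAt.comp y hσφ
  calc fderiv 𝕜 σ (φ y) (σ (φ y))
      = fderiv 𝕜 (fun z => σ (φ z)) y (π (σ (φ y))) := by
        rw [hσφ.fderiv, ContinuousLinearMap.comp_apply, ← hσy]
    _ = fderiv 𝕜 (fun z => fderiv 𝕜 φ z (π (σ (φ z)))) y (π (σ (φ y))) := by
        rw [htan.fderiv_eq]
    _ = _ := by
        rw [fderiv_clm_apply hDφ hπσφ.differentiableAt, hπσφ.fderiv]
        simp only [add_apply, ContinuousLinearMap.comp_apply,
          ContinuousLinearMap.flip_apply, ← hσy]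

end

theorem ContDiffAt.map_nhds_eq_of_injective_fderiv {𝕜 E : Type*} [RCLike 𝕜]
    [NormedAddCommGroup E] [NormedSpace 𝕜 E] [FiniteDimensional 𝕜 E]
    {ψ : E → E} {x : E} {n : WithTop ℕ∞} (hψ : ContDiffAt 𝕜 n ψ x) (hn : n ≠ 0)
    (hinj : Function.Injective (fderiv 𝕜 ψ x)) : map ψ (𝓝 x) = 𝓝 (ψ x) :=
  have : CompleteSpace E := FiniteDimensional.complete 𝕜 E
  HasStrictFDerivAt.map_nhds_eq_of_equiv
    (f' := (LinearEquiv.ofInjectiveEndo (fderiv 𝕜 ψ x : E →ₗ[𝕜] E) hinj).toContinuousLinearEquiv)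
    (hψ.hasStrictFDerivAt hn)

theorem tangential_decomposition_general
    {H : Type*} [NormedAddCommGroup H] [InnerProductSpace ℝ H]
    {m : ℕ} (U : Set H) (V : Set (Fin m → ℝ)) (hV : IsOpen V)
    (ζ : Fin m → H) (M : Set H)
    (φ : (Fin m → ℝ) → H) (hφ : ContDiff ℝ 2 φ)
    (hbij : Set.BijOn φ V (U ∩ M))
    (hinv : ∀ g ∈ U ∩ M, φ (fun i => (inner ℝ (ζ i) g : ℝ)) = g)
    (hDinj : ∀ y ∈ V, Function.Injective (fderiv ℝ φ y))
    (σ : H → H) (hσ : ContDiff ℝ 1 σ)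
    (htan : ∀ g ∈ U ∩ M,
      σ g = fderiv ℝ φ (fun i => (inner ℝ (ζ i) g : ℝ)) (fun i => (inner ℝ (ζ i) (σ g) : ℝ)))
    (h : H) (hh : h ∈ U ∩ M) :
    fderiv ℝ σ h (σ h) =
      fderiv ℝ φ (fun i => (inner ℝ (ζ i) h : ℝ))
          (fun i => (inner ℝ (ζ i) (fderiv ℝ σ h (σ h)) : ℝ)) +
        fderiv ℝ (fderiv ℝ φ) (fun i => (inner ℝ (ζ i) h : ℝ))
          (fun i => (inner ℝ (ζ i) (σ h) : ℝ)) (fun i => (inner ℝ (ζ i) (σ h) : ℝ)) := by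
  let π : H →L[ℝ] Fin m → ℝ := .pi fun i => innerSL ℝ (ζ i)
  obtain ⟨y, hyV, rfl⟩ := hbij.surjOn hh
  have hφπ : ∀ z ∈ V, φ (π (φ z)) = φ z := fun z hz => hinv _ (hbij.mapsTo hz)
  have hπφ_inj : Function.Injective (fderiv ℝ (π ∘ φ) y) :=
    injective_fderiv_of_comp_eventuallyEq (hφ.differentiable two_ne_zero _)
      (π.differentiableAt.comp y (hφ.differentiable two_ne_zero y))
      (eventually_of_mem (hV.mem_nhds hyV) hφπ) (hDinj y hyV)
  have hnhds : π '' (φ '' V) ∈ 𝓝 (π (φ y)) := by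
    have hmap := (π.contDiff.comp hφ).contDiffAt.map_nhds_eq_of_injective_fderiv
      two_ne_zero hπφ_inj
    rw [← image_comp, ← Function.comp_apply (f := π), ← hmap]
    exact image_mem_map (hV.mem_nhds hyV)
  have hφ_tangent : (fun z => σ (φ z)) =ᶠ[𝓝 (π (φ y))]
      fun z => fderiv ℝ φ z (π (σ (φ z))) := by
    filter_upwards [hnhds]
    rintro _ ⟨_, ⟨z, hz, rfl⟩, rfl⟩
    rw [hφπ z hz]
    exact htan _ (hbij.mapsTo hz)
  have hdecomp := fderiv_apply_self_eq_of_tangent π hφ.contDiffAt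
    (hσ.differentiable one_ne_zero _) hφ_tangent
  rwa [hφπ y hyV] at hdecomp

/-- **Decomposition of `Dσ(h)σ(h)` along a tangential parametrization.**
Let `H` be a separable Hilbert space, `U ⊆ H` open, `V ⊆ ℝ^m` open, `ζ₁, …, ζ_m ∈ H`, and
write `⟨ζ, g⟩ := (⟨ζ₁, g⟩, …, ⟨ζ_m, g⟩) ∈ ℝ^m`. Let `M ⊆ H`, let `φ : ℝ^m → H` be twice
continuously differentiable with bounded (first and second) derivatives, mapping `V`
bijectively onto `U ∩ M` with inverse `g ↦ ⟨ζ, g⟩` (i.e. `φ(⟨ζ, g⟩) = g` on `U ∩ M`) and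
with `Dφ(y)` injective for all `y ∈ V`. Let `σ : H → H` be continuously differentiable with
`σ(g) = Dφ(⟨ζ, g⟩)(⟨ζ, σ(g)⟩)` for all `g ∈ U ∩ M`. Then for every `h ∈ U ∩ M`, with
`y = ⟨ζ, h⟩`, one has
`Dσ(h)σ(h) = Dφ(y)(⟨ζ, Dσ(h)σ(h)⟩) + D²φ(y)(⟨ζ, σ(h)⟩, ⟨ζ, σ(h)⟩)`. -/
theorem tangential_decomposition
    {H : Type*} [NormedAddCommGroup H] [InnerProductSpace ℝ H] [CompleteSpace H]
    [TopologicalSpace.SeparableSpace H]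
    {m : ℕ} (U : Set H) (hU : IsOpen U) (V : Set (Fin m → ℝ)) (hV : IsOpen V)
    (ζ : Fin m → H) (M : Set H)
    (φ : (Fin m → ℝ) → H) (hφ : ContDiff ℝ 2 φ)
    (hφ' : ∃ C : ℝ, ∀ y : Fin m → ℝ, ‖fderiv ℝ φ y‖ ≤ C)
    (hφ'' : ∃ C : ℝ, ∀ y : Fin m → ℝ, ‖fderiv ℝ (fderiv ℝ φ) y‖ ≤ C)
    (hbij : Set.BijOn φ V (U ∩ M))
    (hinv : ∀ g ∈ U ∩ M, φ (fun i => (inner ℝ (ζ i) g : ℝ)) = g)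
    (hDinj : ∀ y ∈ V, Function.Injective (fderiv ℝ φ y))
    (σ : H → H) (hσ : ContDiff ℝ 1 σ)
    (htan : ∀ g ∈ U ∩ M,
      σ g = fderiv ℝ φ (fun i => (inner ℝ (ζ i) g : ℝ)) (fun i => (inner ℝ (ζ i) (σ g) : ℝ)))
    (h : H) (hh : h ∈ U ∩ M) :
    fderiv ℝ σ h (σ h) =
      fderiv ℝ φ (fun i => (inner ℝ (ζ i) h : ℝ))
          (fun i => (inner ℝ (ζ i) (fderiv ℝ σ h (σ h)) : ℝ)) +
        fderiv ℝ (fderiv ℝ φ) (fun i => (inner ℝ (ζ i) h : ℝ))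
          (fun i => (inner ℝ (ζ i) (σ h) : ℝ)) (fun i => (inner ℝ (ζ i) (σ h) : ℝ)) :=
  tangential_decomposition_general U V hV ζ M φ hφ hbij hinv hDinj σ hσ htan h hh
end

section
/- Let H be a separable Hilbert space and for each j ∈ ℕ let σ^j : H → H be continuously differentiable. Suppose there is a sequence (κ_j)_{j∈ℕ} of nonnegative reals with Σ_{j∈ℕ} κ_j² < ∞ such that for every j ∈ ℕ one has ‖σ^j(h₁) − σ^j(h₂)‖ ≤ κ_j ‖h₁ − h₂‖ for all h₁, h₂ ∈ H and ‖σ^j(h)‖ ≤ κ_j (1 + ‖h‖) for all h ∈ H. Then: (1) for every h ∈ H the series Σ_{j∈ℕ} ‖Dσ^j(h) σ^j(h)‖ converges (in particular Σ_{j∈ℕ} Dσ^j(h) σ^j(h) converges absolutely in H); and (2) the mapping H → H, h ↦ Σ_{j∈ℕ} Dσ^j(h) σ^j(h) is continuous. -/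
open Topology

/-- A locally uniform Weierstrass M-test: a bound `‖f i x‖ ≤ u i * g x` with `g` continuous
bounds the terms by `u i * (g x₀ + 1)` near each `x₀`. -/
theorem continuous_tsum_of_norm_le_mul {α β F : Type*} [TopologicalSpace β]
    [NormedAddCommGroup F] [CompleteSpace F] {f : α → β → F} {u : α → ℝ} {g : β → ℝ}
    (hf : ∀ i, Continuous (f i)) (hu : Summable u) (hu0 : ∀ i, 0 ≤ u i) (hg : Continuous g)
    (hfu : ∀ i x, ‖f i x‖ ≤ u i * g x) : Continuous fun x => ∑' i, f i x := by
  refine continuous_iff_continuousAt.2 fun x₀ => ?_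
  have hnhds : {x | g x < g x₀ + 1} ∈ 𝓝 x₀ :=
    (isOpen_lt hg continuous_const).mem_nhds (lt_add_one (g x₀))
  refine (continuousOn_tsum (fun i => (hf i).continuousOn) (hu.mul_right (g x₀ + 1))
    fun i x hx => ?_).continuousAt hnhds
  exact (hfu i x).trans (mul_le_mul_of_nonneg_left (le_of_lt hx) (hu0 i))

theorem norm_fderiv_apply_self_le {𝕜 E : Type*} [NontriviallyNormedField 𝕜]
    [NormedAddCommGroup E] [NormedSpace 𝕜 E] {f : E → E} {K : ℝ} (hK : 0 ≤ K)
    (hLip : ∀ x y, ‖f x - f y‖ ≤ K * ‖x - y‖) (hgrowth : ∀ x, ‖f x‖ ≤ K * (1 + ‖x‖)) (x : E) :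
    ‖fderiv 𝕜 f x (f x)‖ ≤ K ^ 2 * (1 + ‖x‖) :=
  calc ‖fderiv 𝕜 f x (f x)‖ ≤ ‖fderiv 𝕜 f x‖ * ‖f x‖ := (fderiv 𝕜 f x).le_opNorm _
    _ ≤ K * (K * (1 + ‖x‖)) :=
      mul_le_mul (norm_fderiv_le_of_lip' 𝕜 hK (.of_forall fun y => hLip y x)) (hgrowth x)
        (norm_nonneg _) hK
    _ = K ^ 2 * (1 + ‖x‖) := by ring

theorem correction_term_summable_and_continuous_general
    {H : Type*} [NormedAddCommGroup H] [InnerProductSpace ℝ H] [CompleteSpace H]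
    (σ : ℕ → H → H) (hσ : ∀ j : ℕ, ContDiff ℝ 1 (σ j))
    (κ : ℕ → ℝ) (hκ0 : ∀ j : ℕ, 0 ≤ κ j) (hκ : Summable fun j : ℕ => κ j ^ 2)
    (hLip : ∀ (j : ℕ) (h₁ h₂ : H), ‖σ j h₁ - σ j h₂‖ ≤ κ j * ‖h₁ - h₂‖)
    (hgrowth : ∀ (j : ℕ) (h : H), ‖σ j h‖ ≤ κ j * (1 + ‖h‖)) :
    (∀ h : H, Summable fun j : ℕ => ‖fderiv ℝ (σ j) h (σ j h)‖) ∧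
    Continuous fun h : H => ∑' j : ℕ, fderiv ℝ (σ j) h (σ j h) := by
  have hbound : ∀ j h, ‖fderiv ℝ (σ j) h (σ j h)‖ ≤ κ j ^ 2 * (1 + ‖h‖) := fun j =>
    norm_fderiv_apply_self_le (hκ0 j) (hLip j) (hgrowth j)
  have hcont : ∀ j, Continuous fun h => fderiv ℝ (σ j) h (σ j h) := fun j =>
    ((hσ j).continuous_fderiv one_ne_zero).clm_apply (hσ j).continuous
  refine ⟨fun h => ?_, ?_⟩
  · exact (hκ.mul_right _).of_nonneg_of_le (fun j => norm_nonneg _) (fun j => hbound j h)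
  · exact continuous_tsum_of_norm_le_mul hcont hκ (fun j => sq_nonneg _)
      (continuous_const.add continuous_norm) hbound

/-- **Summability and continuity of the Stratonovich-type correction term.**
Let `H` be a separable Hilbert space and for each `j ∈ ℕ` let `σ j : H → H` be continuously
differentiable. Suppose there is a sequence `(κ j)` of nonnegative reals with `Σ κ j ² < ∞`
such that `‖σ j h₁ - σ j h₂‖ ≤ κ j * ‖h₁ - h₂‖` for all `h₁ h₂ ∈ H` and
`‖σ j h‖ ≤ κ j * (1 + ‖h‖)` for all `h ∈ H`. Then for every `h ∈ H` the series
`Σ_j ‖Dσ j (h) (σ j h)‖` converges (so `Σ_j Dσ j (h) (σ j h)` converges absolutely in `H`),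
and the mapping `h ↦ Σ_j Dσ j (h) (σ j h)` is continuous. -/
theorem correction_term_summable_and_continuous
    {H : Type*} [NormedAddCommGroup H] [InnerProductSpace ℝ H] [CompleteSpace H]
    [TopologicalSpace.SeparableSpace H]
    (σ : ℕ → H → H) (hσ : ∀ j : ℕ, ContDiff ℝ 1 (σ j))
    (κ : ℕ → ℝ) (hκ0 : ∀ j : ℕ, 0 ≤ κ j) (hκ : Summable fun j : ℕ => κ j ^ 2)
    (hLip : ∀ (j : ℕ) (h₁ h₂ : H), ‖σ j h₁ - σ j h₂‖ ≤ κ j * ‖h₁ - h₂‖)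
    (hgrowth : ∀ (j : ℕ) (h : H), ‖σ j h‖ ≤ κ j * (1 + ‖h‖)) :
    (∀ h : H, Summable fun j : ℕ => ‖fderiv ℝ (σ j) h (σ j h)‖) ∧
    Continuous fun h : H => ∑' j : ℕ, fderiv ℝ (σ j) h (σ j h) :=
  correction_term_summable_and_continuous_general σ hσ κ hκ0 hκ hLip hgrowth
end
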